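/- arXiv:2207.10170 — 4 statements merged into one kernel-verified Lean document; each statement's English description precedes it below -/
import Mathlib

section
/- Upper bound on the trajectory cross-entropy (Eq. (8) of the paper): fix an adversary ν and a victim policy π, and suppose that for every pair (o, a) with ρ_v(π)(o, a) > 0 and every state sequence s with p0(s_0) · ∏_{t=1}^{T} p(s_t | s_{t−1}, a_{t−1}) > 0, one has ν_0(o_0 | s_0) > 0 and ν_t(o_t | s_{≤t}, o_{<t}, a_{<t}) > 0 for all 1 ≤ t ≤ T (in particular ρ_v(ν, π)(o, a) > 0 whenever ρ_v(π)(o, a) > 0). Writing q(s | a) := p0(s_0) · ∏_{t=1}^{T} p(s_t | s_{t−1}, a_{t−1}) for the state-sequence weight, the cross-entropy H[ρ_v(π), ρ_v(ν, π)] := −Σ_{(o,a)} ρ_v(π)(o, a) · log ρ_v(ν, π)(o, a) satisfies H[ρ_v(π), ρ_v(ν, π)] ≤ −Σ_{(o,a)} ρ_v(π)(o, a) · [ log π_0(a_0 | o_0) + Σ_{t=1}^{T} log π_t(a_t | o_{≤t}, a_{<t}) + Σ_{s} q(s | a) · ( log ν_0(o_0 | s_0) + Σ_{t=1}^{T} log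 ν_t(o_t | s_{≤t}, o_{<t}, a_{<t}) ) ]. -/
/-!
For a fixed victim trajectory `(o, a)` the attacked marginal factors as
`ρ_v(ν, π)(o, a) = (Σ_s q(s | a) ∏_t ν_t(o_t | …)) · ∏_t π_t(a_t | …)`, and the weights `q(· | a)`
sum to one, being the path probabilities of the Markov chain driven by the fixed actions `a`.
Jensen's inequality for the concave logarithm with these weights gives, pointwise on the support
of `ρ_v(π)`, `log ρ_v(ν, π)(o, a) ≥ Σ_t log π_t + Σ_s q(s | a) Σ_t log ν_t`; off the support both
sides carry the factor `ρ_v(π)(o, a) = 0`.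
-/

/-- A victim policy: at time `t ≤ T`, maps the observation prefix `o_{≤ t}` and the
action prefix `a_{< t}` to a distribution over the action `a_t`. -/
def Pol (T : ℕ) (S A : Type) : Type :=
  (t : Fin (T + 1)) → (Fin (t.1 + 1) → S) → (Fin t.1 → A) → PMF A

/-- An adversary: at time `t ≤ T`, maps the true-state prefix `s_{≤ t}`, the past
observations `o_{< t}` and past actions `a_{< t}` to a distribution over `o_t`. -/
def Adv (T : ℕ) (S A : Type) : Type :=
  (t : Fin (T + 1)) → (Fin (t.1 + 1) → S) → (Fin t.1 → S) → (Fin t.1 → A) → PMF S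

/-- The prefix `x_{≤ t}` of a sequence `x`. -/
def upTo {T : ℕ} {X : Type} (x : Fin (T + 1) → X) (t : Fin (T + 1)) : Fin (t.1 + 1) → X :=
  fun i => x ⟨i.1, by have h1 := i.2; have h2 := t.2; omega⟩

/-- The strict prefix `x_{< t}` of a sequence `x`. -/
def below {T : ℕ} {X : Type} (x : Fin (T + 1) → X) (t : Fin (T + 1)) : Fin t.1 → X :=
  fun i => x ⟨i.1, by have h1 := i.2; have h2 := t.2; omega⟩

/-- Density of the attacked joint trajectory distribution `ρ_a(ν, π)` at `(s, o, a)`. -/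
noncomputable def rhoA {T : ℕ} {S A : Type} (p0 : PMF S) (p : S → A → PMF S)
    (ν : Adv T S A) (π : Pol T S A)
    (s o : Fin (T + 1) → S) (a : Fin (T + 1) → A) : ENNReal :=
  ∏ t : Fin (T + 1),
    (if t.1 = 0 then p0 (s t)
      else p (s ⟨t.1 - 1, by have := t.2; omega⟩) (a ⟨t.1 - 1, by have := t.2; omega⟩) (s t)) *
    ν t (upTo s t) (below o t) (below a t) (o t) *
    π t (upTo o t) (below a t) (a t)

/-- Density of the unattacked trajectory distribution `ρ_v(π)` at `(s, a)`. -/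
noncomputable def rhoV {T : ℕ} {S A : Type} (p0 : PMF S) (p : S → A → PMF S)
    (π : Pol T S A) (s : Fin (T + 1) → S) (a : Fin (T + 1) → A) : ENNReal :=
  ∏ t : Fin (T + 1),
    (if t.1 = 0 then p0 (s t)
      else p (s ⟨t.1 - 1, by have := t.2; omega⟩) (a ⟨t.1 - 1, by have := t.2; omega⟩) (s t)) *
    π t (upTo s t) (below a t) (a t)

/-- The state-sequence weight `q(s | a) = p0(s_0) · ∏_{t=1}^{T} p(s_t | s_{t-1}, a_{t-1})`. -/
noncomputable def stateW {T : ℕ} {S A : Type} (p0 : PMF S) (p : S → A → PMF S)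
    (s : Fin (T + 1) → S) (a : Fin (T + 1) → A) : ENNReal :=
  ∏ t : Fin (T + 1),
    if t.1 = 0 then p0 (s t)
      else p (s ⟨t.1 - 1, by have := t.2; omega⟩) (a ⟨t.1 - 1, by have := t.2; omega⟩) (s t)

open Finset

theorem Real.sum_mul_log_le_log_sum_mul {ι : Type*} (s : Finset ι) (w x : ι → ℝ)
    (hw : ∀ i ∈ s, 0 ≤ w i) (hw₁ : ∑ i ∈ s, w i = 1) (hx : ∀ i ∈ s, w i ≠ 0 → 0 < x i) :
    ∑ i ∈ s, w i * Real.log (x i) ≤ Real.log (∑ i ∈ s, w i * x i) := by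
  classical
  have hsupp : ∀ f : ι → ℝ, ∑ i ∈ s with w i ≠ 0, w i * f i = ∑ i ∈ s, w i * f i :=
    fun f => sum_filter_of_ne fun _ _ h hw0 => h (by rw [hw0, zero_mul])
  rw [← hsupp, ← hsupp]
  exact strictConcaveOn_log_Ioi.concaveOn.le_map_sum (fun i hi => hw i (mem_filter.1 hi).1)
    (by rwa [sum_filter_ne_zero]) fun i hi => hx i (mem_filter.1 hi).1 (mem_filter.1 hi).2

theorem Fin.sum_markov_chain_eq_one {R S : Type*} [CommSemiring R] [Fintype S] :
    ∀ {n : ℕ} (μ : S → R) (κ : Fin n → S → S → R),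
      ∑ z, μ z = 1 → (∀ i z, ∑ y, κ i z y = 1) →
      ∑ s : Fin (n + 1) → S, μ (s 0) * ∏ i : Fin n, κ i (s i.castSucc) (s i.succ) = 1
  | 0, μ, _, hμ, _ => by
    simpa using ((Equiv.funUnique (Fin 1) S).sum_comp μ).trans hμ
  | n + 1, μ, κ, hμ, hκ => by
    rw [← (Fin.consEquiv fun _ => S).sum_comp, Fintype.sum_prod_type]
    simp only [Fin.consEquiv_apply, Fin.prod_univ_succ, Fin.cons_zero, Fin.castSucc_zero,
      Fin.cons_succ, ← Fin.succ_castSucc, ← mul_sum,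
      Fin.sum_markov_chain_eq_one _ _ (hκ 0 _) fun i => hκ i.succ, mul_one, hμ]

theorem ENNReal.log_toReal_prod {ι : Type*} (s : Finset ι) (x : ι → ENNReal)
    (h₀ : ∀ i ∈ s, x i ≠ 0) (h_top : ∀ i ∈ s, x i ≠ ⊤) :
    Real.log (∏ i ∈ s, x i).toReal = ∑ i ∈ s, Real.log (x i).toReal := by
  rw [ENNReal.toReal_prod, Real.log_prod fun i hi => ENNReal.toReal_ne_zero.2 ⟨h₀ i hi, h_top i hi⟩]

section Trajectory

variable {T : ℕ} {S A : Type} (p0 : PMF S) (p : S → A → PMF S) (ν : Adv T S A) (π : Pol T S A)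

noncomputable def advLik (s o : Fin (T + 1) → S) (a : Fin (T + 1) → A) : ENNReal :=
  ∏ t, ν t (upTo s t) (below o t) (below a t) (o t)

noncomputable def polLik (o : Fin (T + 1) → S) (a : Fin (T + 1) → A) : ENNReal :=
  ∏ t, π t (upTo o t) (below a t) (a t)

theorem rhoA_eq_mul (s o : Fin (T + 1) → S) (a : Fin (T + 1) → A) :
    rhoA p0 p ν π s o a = stateW p0 p s a * advLik ν s o a * polLik π o a := by
  simp only [rhoA, stateW, advLik, polLik, prod_mul_distrib]

theorem rhoV_eq_mul (o : Fin (T + 1) → S) (a : Fin (T + 1) → A) :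
    rhoV p0 p π o a = stateW p0 p o a * polLik π o a := by
  simp only [rhoV, stateW, polLik, prod_mul_distrib]

theorem stateW_eq_mul_prod (s : Fin (T + 1) → S) (a : Fin (T + 1) → A) :
    stateW p0 p s a = p0 (s 0) * ∏ i : Fin T, p (s i.castSucc) (a i.castSucc) (s i.succ) := by
  rw [stateW, Fin.prod_univ_succ]
  rfl

theorem stateW_ne_top (s : Fin (T + 1) → S) (a : Fin (T + 1) → A) : stateW p0 p s a ≠ ⊤ := by
  rw [stateW_eq_mul_prod]
  exact ENNReal.mul_ne_top (p0.apply_ne_top _) (ENNReal.prod_ne_top fun _ _ => PMF.apply_ne_top _ _)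

theorem advLik_ne_top (s o : Fin (T + 1) → S) (a : Fin (T + 1) → A) : advLik ν s o a ≠ ⊤ :=
  ENNReal.prod_ne_top fun _ _ => PMF.apply_ne_top _ _

theorem polLik_ne_top (o : Fin (T + 1) → S) (a : Fin (T + 1) → A) : polLik π o a ≠ ⊤ :=
  ENNReal.prod_ne_top fun _ _ => PMF.apply_ne_top _ _

theorem sum_stateW [Fintype S] (a : Fin (T + 1) → A) : ∑ s, stateW p0 p s a = 1 := by
  simp only [stateW_eq_mul_prod]
  exact Fin.sum_markov_chain_eq_one p0 (fun i z => p z (a i.castSucc))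
    ((tsum_fintype _).symm.trans p0.tsum_coe) fun _ z => (tsum_fintype _).symm.trans (p z _).tsum_coe

theorem toReal_sum_rhoA [Fintype S] (o : Fin (T + 1) → S) (a : Fin (T + 1) → A) :
    (∑ s, rhoA p0 p ν π s o a).toReal =
      (∑ s, (stateW p0 p s a).toReal * (advLik ν s o a).toReal) * (polLik π o a).toReal := by
  simp only [rhoA_eq_mul]
  rw [ENNReal.toReal_sum fun s _ => ENNReal.mul_ne_top (ENNReal.mul_ne_top
    (stateW_ne_top p0 p s a) (advLik_ne_top ν s o a)) (polLik_ne_top π o a), sum_mul]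
  simp only [ENNReal.toReal_mul]

theorem sum_log_pol_add_expected_sum_log_adv_le_log_sum_rhoA [Fintype S] (o : Fin (T + 1) → S)
    (a : Fin (T + 1) → A) (hπ : polLik π o a ≠ 0)
    (hν : ∀ s, stateW p0 p s a ≠ 0 → ∀ t, ν t (upTo s t) (below o t) (below a t) (o t) ≠ 0) :
    ∑ t, Real.log (π t (upTo o t) (below a t) (a t)).toReal +
        ∑ s, (stateW p0 p s a).toReal *
          ∑ t, Real.log (ν t (upTo s t) (below o t) (below a t) (o t)).toReal ≤
      Real.log (∑ s, rhoA p0 p ν π s o a).toReal := by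
  set w := fun s => (stateW p0 p s a).toReal
  set N := fun s => (advLik ν s o a).toReal
  have hw₁ : ∑ s, w s = 1 := by
    rw [← ENNReal.toReal_sum fun s _ => stateW_ne_top p0 p s a, sum_stateW, ENNReal.toReal_one]
  have hN : ∀ s, w s ≠ 0 → 0 < N s := fun s hs =>
    ENNReal.toReal_pos (prod_ne_zero_iff.2 fun t _ => hν s (ENNReal.toReal_ne_zero.1 hs).1 t)
      (advLik_ne_top ν s o a)
  have hwN : 0 < ∑ s, w s * N s := by
    obtain ⟨s, -, hs⟩ := exists_ne_zero_of_sum_ne_zero (hw₁.trans_ne one_ne_zero)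
    exact sum_pos' (fun s _ => mul_nonneg ENNReal.toReal_nonneg ENNReal.toReal_nonneg)
      ⟨s, mem_univ s, mul_pos (ENNReal.toReal_nonneg.lt_of_ne' hs) (hN s hs)⟩
  have hP : 0 < (polLik π o a).toReal := ENNReal.toReal_pos hπ (polLik_ne_top π o a)
  calc _ = Real.log (polLik π o a).toReal + ∑ s, w s * Real.log (N s) := by
        rw [polLik, ENNReal.log_toReal_prod _ _ (fun t _ => prod_ne_zero_iff.1 hπ t (mem_univ t))
          fun _ _ => PMF.apply_ne_top _ _]
        refine congrArg _ (sum_congr rfl fun s _ => ?_)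
        change w s * _ = w s * _
        by_cases hs : w s = 0
        · rw [hs, zero_mul, zero_mul]
        · exact congrArg (w s * ·) (ENNReal.log_toReal_prod _ _
            (fun t _ => hν s (ENNReal.toReal_ne_zero.1 hs).1 t) fun _ _ => PMF.apply_ne_top _ _).symm
    _ ≤ Real.log (polLik π o a).toReal + Real.log (∑ s, w s * N s) :=
        add_le_add_right (Real.sum_mul_log_le_log_sum_mul _ w N
          (fun _ _ => ENNReal.toReal_nonneg) hw₁ fun s _ => hN s) _
    _ = Real.log (∑ s, rhoA p0 p ν π s o a).toReal := by
        rw [toReal_sum_rhoA, Real.log_mul hwN.ne' hP.ne', add_comm]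

end Trajectory

theorem cross_entropy_jensen_upper_bound_general (T : ℕ) (S A : Type)
    [Fintype S] [Fintype A]
    (p0 : PMF S) (p : S → A → PMF S) (ν : Adv T S A) (π : Pol T S A)
    (hpos : ∀ (o : Fin (T + 1) → S) (a : Fin (T + 1) → A), rhoV p0 p π o a ≠ 0 →
      ∀ s : Fin (T + 1) → S, stateW p0 p s a ≠ 0 →
        ∀ t : Fin (T + 1), ν t (upTo s t) (below o t) (below a t) (o t) ≠ 0) :
    -∑ x : (Fin (T + 1) → S) × (Fin (T + 1) → A),
        (rhoV p0 p π x.1 x.2).toReal *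
          Real.log ((∑ s : Fin (T + 1) → S, rhoA p0 p ν π s x.1 x.2).toReal) ≤
      -∑ x : (Fin (T + 1) → S) × (Fin (T + 1) → A),
        (rhoV p0 p π x.1 x.2).toReal *
          ((∑ t : Fin (T + 1), Real.log ((π t (upTo x.1 t) (below x.2 t) (x.2 t)).toReal)) +
            ∑ s : Fin (T + 1) → S, (stateW p0 p s x.2).toReal *
              ∑ t : Fin (T + 1),
                Real.log ((ν t (upTo s t) (below x.1 t) (below x.2 t) (x.1 t)).toReal)) := by
  refine neg_le_neg (sum_le_sum fun x _ => ?_)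
  by_cases hV : rhoV p0 p π x.1 x.2 = 0
  · simp only [hV, ENNReal.toReal_zero, zero_mul, le_refl]
  refine mul_le_mul_of_nonneg_left ?_ ENNReal.toReal_nonneg
  exact sum_log_pol_add_expected_sum_log_adv_le_log_sum_rhoA p0 p ν π x.1 x.2
    (right_ne_zero_of_mul (rhoV_eq_mul p0 p π x.1 x.2 ▸ hV)) (hpos x.1 x.2 hV)

/-- Upper bound on the trajectory cross-entropy (Eq. (8) of the paper):
assuming that, for every `(o, a)` in the support of `ρ_v(π)` and every state sequence `s`
with positive weight `q(s | a)`, all the adversary factors `ν_t(o_t | s_{≤t}, o_{<t}, a_{<t})`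
are positive, the cross-entropy `H[ρ_v(π), ρ_v(ν, π)] = −Σ_{(o,a)} ρ_v(π)(o,a) · log ρ_v(ν,π)(o,a)`
is bounded above by
`−Σ_{(o,a)} ρ_v(π)(o,a) · [ Σ_{t=0}^{T} log π_t(a_t | o_{≤t}, a_{<t})
  + Σ_s q(s|a) · Σ_{t=0}^{T} log ν_t(o_t | s_{≤t}, o_{<t}, a_{<t}) ]`. -/
theorem cross_entropy_jensen_upper_bound (T : ℕ) (S A : Type)
    [Fintype S] [Nonempty S] [Fintype A] [Nonempty A]
    (p0 : PMF S) (p : S → A → PMF S) (ν : Adv T S A) (π : Pol T S A)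
    (hpos : ∀ (o : Fin (T + 1) → S) (a : Fin (T + 1) → A), rhoV p0 p π o a ≠ 0 →
      ∀ s : Fin (T + 1) → S, stateW p0 p s a ≠ 0 →
        ∀ t : Fin (T + 1), ν t (upTo s t) (below o t) (below a t) (o t) ≠ 0) :
    -∑ x : (Fin (T + 1) → S) × (Fin (T + 1) → A),
        (rhoV p0 p π x.1 x.2).toReal *
          Real.log ((∑ s : Fin (T + 1) → S, rhoA p0 p ν π s x.1 x.2).toReal) ≤
      -∑ x : (Fin (T + 1) → S) × (Fin (T + 1) → A),
        (rhoV p0 p π x.1 x.2).toReal *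
          ((∑ t : Fin (T + 1), Real.log ((π t (upTo x.1 t) (below x.2 t) (x.2 t)).toReal)) +
            ∑ s : Fin (T + 1) → S, (stateW p0 p s x.2).toReal *
              ∑ t : Fin (T + 1),
                Real.log ((ν t (upTo s t) (below x.1 t) (below x.2 t) (x.1 t)).toReal)) :=
  cross_entropy_jensen_upper_bound_general T S A p0 p ν π hpos
end

section
/- Correctness of the symmetry-based attack (Algorithm 2): let σ : S → S be a map whose pushforward preserves the initial distribution, p0.map σ = p0. Define the adversary ν^σ by: ν^σ_0(s_0) is the point mass at σ(s_0), and for every 1 ≤ t ≤ T, ν^σ_t(s_{≤t}, o_{<t}, a_{<t}) = p(o_{t−1}, a_{t−1}) (i.e. the observation o_t is drawn from the true transition kernel applied to the previous observation and the previous action, independently of the true states). Then for every victim policy π, the victim's observation-process distribution in the attacked environment equals the unattacked trajectory distribution: ρ_v(ν^σ, π) = ρ_v(π) as PMFs on (Fin (T+1) → S) × (Fin (T+1) → A). -/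
/-- The symmetry-based adversary `ν^σ` of Algorithm 2: at time `0` it outputs the point
mass at `σ(s_0)`, and at each time `1 ≤ t ≤ T` the observation `o_t` is drawn from the true
transition kernel applied to the previous observation and previous action,
`ν^σ_t(s_{≤t}, o_{<t}, a_{<t}) = p(o_{t-1}, a_{t-1})`, independently of the true states. -/
noncomputable def advSigma {T : ℕ} {S A : Type} (p : S → A → PMF S) (σ : S → S) :
    Adv T S A :=
  fun t sp op ap =>
    if h : t.1 = 0 then PMF.pure (σ (sp (Fin.last t.1)))
    else p (op ⟨t.1 - 1, by omega⟩) (ap ⟨t.1 - 1, by omega⟩)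

theorem Fin.sum_mul_prod_stochastic_chain {R S : Type*} [CommSemiring R] [Fintype S] (n : ℕ)
    (q : Fin n → S → S → R) (hq : ∀ t x, ∑ y, q t x y = 1) (h : S → R) :
    ∑ s : Fin (n + 1) → S, h (s 0) * ∏ t : Fin n, q t (s t.castSucc) (s t.succ) = ∑ x, h x := by
  induction n with
  | zero => simpa using Fintype.sum_equiv (Equiv.funUnique (Fin 1) S) _ h fun _ => rfl
  | succ n ih =>
    rw [← Fintype.sum_equiv (Fin.snocEquiv fun _ => S) _ _ fun _ => rfl, Fintype.sum_prod_type_right]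
    calc _ = ∑ s : Fin (n + 1) → S, h (s 0) * (∏ t : Fin n, q t.castSucc (s t.castSucc) (s t.succ)) *
            ∑ y, q (Fin.last n) (s (Fin.last n)) y := by
          refine Fintype.sum_congr _ _ fun s => ?_
          simp [Fin.snocEquiv, Finset.mul_sum, Fin.prod_univ_castSucc, mul_assoc,
            Fin.succ_castSucc, -Fin.castSucc_succ]
      _ = ∑ x, h x := by simpa [hq] using ih (fun t => q t.castSucc) (fun t x => hq t.castSucc x)

theorem PMF.sum_coe {α : Type*} [Fintype α] (p : PMF α) : ∑ a, p a = 1 := by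
  simpa [tsum_fintype] using p.tsum_coe

theorem PMF.map_apply_eq_sum {α β : Type*} [Fintype α] (f : α → β) (p : PMF α) (b : β) :
    p.map f b = ∑ a, p a * PMF.pure (f a) b := by
  rw [← PMF.bind_pure_comp, PMF.bind_apply, tsum_fintype]
  rfl

section Trajectory

variable {T : ℕ} {S A : Type}

noncomputable def stateFactor (p0 : PMF S) (p : S → A → PMF S) (s : Fin (T + 1) → S)
    (a : Fin (T + 1) → A) (t : Fin (T + 1)) : ENNReal :=
  if t.1 = 0 then p0 (s t)
  else p (s ⟨t.1 - 1, by have := t.2; omega⟩) (a ⟨t.1 - 1, by have := t.2; omega⟩) (s t)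

noncomputable def transitionWeight (p : S → A → PMF S) (s : Fin (T + 1) → S)
    (a : Fin (T + 1) → A) : ENNReal :=
  ∏ t : Fin T, p (s t.castSucc) (a t.castSucc) (s t.succ)

noncomputable def policyWeight (π : Pol T S A) (o : Fin (T + 1) → S) (a : Fin (T + 1) → A) :
    ENNReal :=
  ∏ t, π t (upTo o t) (below a t) (a t)

theorem stateFactor_zero (p0 : PMF S) (p : S → A → PMF S) (s : Fin (T + 1) → S)
    (a : Fin (T + 1) → A) : stateFactor p0 p s a 0 = p0 (s 0) :=
  if_pos rfl

theorem stateFactor_succ (p0 : PMF S) (p : S → A → PMF S) (s : Fin (T + 1) → S)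
    (a : Fin (T + 1) → A) (t : Fin T) :
    stateFactor p0 p s a t.succ = p (s t.castSucc) (a t.castSucc) (s t.succ) :=
  if_neg (Nat.succ_ne_zero t.1)

theorem prod_stateFactor (p0 : PMF S) (p : S → A → PMF S) (s : Fin (T + 1) → S)
    (a : Fin (T + 1) → A) :
    ∏ t, stateFactor p0 p s a t = p0 (s 0) * transitionWeight p s a := by
  simp only [Fin.prod_univ_succ, stateFactor_zero, stateFactor_succ, transitionWeight]

theorem prod_advSigma (p : S → A → PMF S) (σ : S → S) (s o : Fin (T + 1) → S)
    (a : Fin (T + 1) → A) :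
    ∏ t, advSigma p σ t (upTo s t) (below o t) (below a t) (o t)
      = PMF.pure (σ (s 0)) (o 0) * transitionWeight p o a := by
  rw [Fin.prod_univ_succ]
  rfl

theorem rhoA_eq (p0 : PMF S) (p : S → A → PMF S) (ν : Adv T S A) (π : Pol T S A)
    (s o : Fin (T + 1) → S) (a : Fin (T + 1) → A) :
    rhoA p0 p ν π s o a = p0 (s 0) * transitionWeight p s a *
      (∏ t, ν t (upTo s t) (below o t) (below a t) (o t)) * policyWeight π o a := by
  rw [← prod_stateFactor, policyWeight, ← Finset.prod_mul_distrib, ← Finset.prod_mul_distrib]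
  rfl

theorem rhoV_eq (p0 : PMF S) (p : S → A → PMF S) (π : Pol T S A) (s : Fin (T + 1) → S)
    (a : Fin (T + 1) → A) :
    rhoV p0 p π s a = p0 (s 0) * transitionWeight p s a * policyWeight π s a := by
  rw [← prod_stateFactor, policyWeight, ← Finset.prod_mul_distrib]
  rfl

theorem sum_mul_transitionWeight [Fintype S] (p : S → A → PMF S) (a : Fin (T + 1) → A)
    (h : S → ENNReal) : ∑ s, h (s 0) * transitionWeight p s a = ∑ x, h x :=
  Fin.sum_mul_prod_stochastic_chain T (fun t x => p x (a t.castSucc)) (fun _ x => (p x _).sum_coe) h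

end Trajectory

theorem symmetry_attack_is_undetectable_general (T : ℕ) (S A : Type)
    [Fintype S]
    (p0 : PMF S) (p : S → A → PMF S) (σ : S → S) (hσ : p0.map σ = p0)
    (π : Pol T S A) (o : Fin (T + 1) → S) (a : Fin (T + 1) → A) :
    ∑ s : Fin (T + 1) → S, rhoA p0 p (advSigma p σ) π s o a = rhoV p0 p π o a := by
  calc ∑ s : Fin (T + 1) → S, rhoA p0 p (advSigma p σ) π s o a
      = (∑ s : Fin (T + 1) → S, p0 (s 0) * PMF.pure (σ (s 0)) (o 0) * transitionWeight p s a) *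
          (transitionWeight p o a * policyWeight π o a) := by
        simp only [rhoA_eq, prod_advSigma, Finset.sum_mul]
        exact Fintype.sum_congr _ _ fun s => by ring
    _ = p0.map σ (o 0) * (transitionWeight p o a * policyWeight π o a) := by
        rw [sum_mul_transitionWeight p a fun x => p0 x * PMF.pure (σ x) (o 0), PMF.map_apply_eq_sum]
    _ = rhoV p0 p π o a := by rw [hσ, rhoV_eq, mul_assoc]

/-- Correctness of the symmetry-based attack (Algorithm 2): if the
pushforward of the initial distribution under `σ` preserves it, `p0.map σ = p0`, then for
every victim policy `π` the victim's observation-process distribution in the attacked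
environment equals the unattacked trajectory distribution, `ρ_v(ν^σ, π) = ρ_v(π)` as PMFs
on `(Fin (T+1) → S) × (Fin (T+1) → A)` (stated pointwise via the densities). -/
theorem symmetry_attack_is_undetectable (T : ℕ) (S A : Type)
    [Fintype S] [Nonempty S] [Fintype A] [Nonempty A]
    (p0 : PMF S) (p : S → A → PMF S) (σ : S → S) (hσ : p0.map σ = p0)
    (π : Pol T S A) (o : Fin (T + 1) → S) (a : Fin (T + 1) → A) :
    ∑ s : Fin (T + 1) → S, rhoA p0 p (advSigma p σ) π s o a = rhoV p0 p π o a :=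
  symmetry_attack_is_undetectable_general T S A p0 p σ hσ π o a
end

section
/- Existence of perfect illusory attacks under a nontrivial symmetry (Definition 3.2 is satisfied by the symmetry-based attack): let σ : S → S satisfy p0.map σ = p0, and define the adversary ν^σ by: ν^σ_0(s_0) is the point mass at σ(s_0), and for every 1 ≤ t ≤ T, ν^σ_t(s_{≤t}, o_{<t}, a_{<t}) = p(o_{t−1}, a_{t−1}). Suppose moreover that σ(s̄) ≠ s̄ for some s̄ in the support of p0. Then ν^σ is a perfect illusory attack: (i) for every victim policy π, KL( ρ_v(π) ‖ ρ_v(ν^σ, π) ) = 0, where KL(μ ‖ ρ) := Σ_x μ(x) · log( μ(x) / ρ(x) ) (with summand 0 when μ(x) = 0); and (ii) ν^σ differs from the identity adversary, i.e. there exists a state s with p0(s) > 0 such that ν^σ_0(s) is not the point mass at s. -/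
/-- Kullback–Leibler divergence `KL(μ ‖ ρ) = Σ_x μ(x) · log(μ(x) / ρ(x))` between two
densities on a finite type (the summand is `0` when `μ(x) = 0`). -/
noncomputable def klDiv {X : Type} [Fintype X] (μ ρ : X → ENNReal) : ℝ :=
  ∑ x, (μ x).toReal * Real.log ((μ x).toReal / (ρ x).toReal)

lemma markov_sum {S : Type} [Fintype S] :
    ∀ (n : ℕ) (μ : S → ENNReal) (k : ℕ → S → S → ENNReal),
    (∀ i x, ∑ y, k i x y = 1) →
    (∑ s : Fin (n + 1) → S, ∏ t : Fin (n + 1),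
      (if t.1 = 0 then μ (s t) else k t.1 (s ⟨t.1 - 1, by omega⟩) (s t))) = ∑ x, μ x := by
  intro n
  induction n with
  | zero =>
    intro μ k hk
    rw [← (Fin.consEquiv (fun _ : Fin 1 => S)).sum_comp, Fintype.sum_prod_type]
    simp [Fin.consEquiv, Fin.prod_univ_succ]
  | succ n ih =>
    intro μ k hk
    rw [← (Fin.consEquiv (fun _ : Fin (n + 2) => S)).sum_comp]
    rw [Fintype.sum_prod_type]
    have hx : ∀ (x : S) (s' : Fin (n + 1) → S),
        (∏ t : Fin (n + 2),
          (if t.1 = 0 then μ ((Fin.consEquiv (fun _ => S)) (x, s') t)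
            else k t.1 ((Fin.consEquiv (fun _ => S)) (x, s') ⟨t.1 - 1, by omega⟩)
              ((Fin.consEquiv (fun _ => S)) (x, s') t)))
        = μ x * ∏ t : Fin (n + 1),
            (if t.1 = 0 then (fun y => k 1 x y) (s' t)
              else (fun i => k (i + 1)) t.1 (s' ⟨t.1 - 1, by omega⟩) (s' t)) := by
      intro x s'
      rw [Fin.prod_univ_succ]
      refine congrArg₂ (· * ·) (by simp [Fin.consEquiv]) ?_
      apply Finset.prod_congr rfl
      intro t _
      have hsucc : ((Fin.consEquiv (fun _ : Fin (n + 2) => S)) (x, s')) t.succ = s' t := by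
        simp [Fin.consEquiv]
      by_cases ht : t.1 = 0
      · have ht0 : t = 0 := Fin.ext ht
        subst ht0
        simp [Fin.consEquiv]
      · have h2 : (⟨(t.1 + 1) - 1, by omega⟩ : Fin (n + 2)) = Fin.succ ⟨t.1 - 1, by omega⟩ := by
          apply Fin.ext; simp; omega
        simp only [Fin.consEquiv, Equiv.coe_fn_mk, Fin.val_succ, h2, Fin.cons_succ,
          Nat.succ_ne_zero, if_false, if_neg ht]
    calc (∑ x : S, ∑ s' : Fin (n+1) → S, ∏ t : Fin (n + 2),
          (if t.1 = 0 then μ ((Fin.consEquiv (fun _ => S)) (x, s') t)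
            else k t.1 ((Fin.consEquiv (fun _ => S)) (x, s') ⟨t.1 - 1, by omega⟩)
              ((Fin.consEquiv (fun _ => S)) (x, s') t)))
        = ∑ x : S, μ x * ∑ s' : Fin (n+1) → S, ∏ t : Fin (n + 1),
            (if t.1 = 0 then (fun y => k 1 x y) (s' t)
              else (fun i => k (i + 1)) t.1 (s' ⟨t.1 - 1, by omega⟩) (s' t)) := by
          apply Finset.sum_congr rfl; intro x _
          rw [Finset.mul_sum]
          exact Finset.sum_congr rfl fun s' _ => hx x s'
      _ = ∑ x : S, μ x * ∑ y, k 1 x y := by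
          apply Finset.sum_congr rfl; intro x _
          rw [ih (fun y => k 1 x y) (fun i => k (i + 1)) (fun i x' => hk (i + 1) x')]
      _ = ∑ x : S, μ x := by
          apply Finset.sum_congr rfl; intro x _
          rw [hk 1 x, mul_one]

/-- Existence of perfect illusory attacks under a nontrivial symmetry:
if `σ` preserves the initial distribution, `p0.map σ = p0`, and moves some state `s̄` in
the support of `p0`, then the symmetry-based adversary `ν^σ` is a perfect illusory attack:
(i) for every victim policy `π`, `KL(ρ_v(π) ‖ ρ_v(ν^σ, π)) = 0`; and (ii) `ν^σ` differs
from the identity adversary: there is a state `s` with `p0 s > 0` such that `ν^σ_0(s)` is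
not the point mass at `s`. -/
theorem symmetry_attack_is_perfect_illusory (T : ℕ) (S A : Type)
    [Fintype S] [Nonempty S] [Fintype A] [Nonempty A]
    (p0 : PMF S) (p : S → A → PMF S) (σ : S → S) (hσ : p0.map σ = p0)
    (sbar : S) (hsbar : 0 < p0 sbar) (hne : σ sbar ≠ sbar) :
    (∀ π : Pol T S A,
      klDiv (fun x : (Fin (T + 1) → S) × (Fin (T + 1) → A) => rhoV p0 p π x.1 x.2)
        (fun x : (Fin (T + 1) → S) × (Fin (T + 1) → A) =>
          ∑ s : Fin (T + 1) → S, rhoA p0 p (advSigma p σ) π s x.1 x.2) = 0) ∧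
    (∃ s : S, 0 < p0 s ∧
      advSigma (T := T) (A := A) p σ ⟨0, Nat.succ_pos T⟩ (fun _ => s) Fin.elim0 Fin.elim0 ≠
        PMF.pure s) := by
  constructor
  · intro π
    have key : ∀ (o : Fin (T + 1) → S) (a : Fin (T + 1) → A),
        (∑ s : Fin (T + 1) → S, rhoA p0 p (advSigma p σ) π s o a) = rhoV p0 p π o a := by
      intro o a
      -- notation
      set Pi : Fin (T + 1) → ENNReal := fun t => π t (upTo o t) (below a t) (a t) with hPi
      set N : Fin (T + 1) → ENNReal := fun t =>
        if t.1 = 0 then 1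
        else p (o ⟨t.1 - 1, by have := t.2; omega⟩) (a ⟨t.1 - 1, by have := t.2; omega⟩) (o t)
        with hN
      -- step 1 : factor rhoA
      have h1 : ∀ s : Fin (T + 1) → S, rhoA p0 p (advSigma p σ) π s o a =
          (∏ t : Fin (T + 1),
            (if t.1 = 0 then p0 (s t) * PMF.pure (σ (s t)) (o t)
              else p (s ⟨t.1 - 1, by have := t.2; omega⟩)
                (a ⟨t.1 - 1, by have := t.2; omega⟩) (s t))) *
          ∏ t : Fin (T + 1), N t * Pi t := by
        intro s
        rw [rhoA, ← Finset.prod_mul_distrib]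
        apply Finset.prod_congr rfl
        intro t _
        by_cases ht : t.1 = 0
        · simp only [advSigma]
          rw [dif_pos ht]
          simp only [hN, if_pos ht]
          have hup : upTo s t (Fin.last t.1) = s t := rfl
          rw [hup]; ring
        · simp only [advSigma]
          rw [dif_neg ht]
          simp only [hN, if_neg ht]
          have hb1 : below o t ⟨t.1 - 1, by omega⟩ = o ⟨t.1 - 1, by have := t.2; omega⟩ := rfl
          have hb2 : below a t ⟨t.1 - 1, by omega⟩ = a ⟨t.1 - 1, by have := t.2; omega⟩ := rfl
          rw [hb1, hb2]; ring
      -- step 2 : chain sum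
      have hk : ∀ (i : ℕ) (x : S), ∑ y, p x (a ⟨min (i - 1) T, by omega⟩) y = 1 := by
        intro i x
        have := (p x (a ⟨min (i - 1) T, by omega⟩)).tsum_coe
        rwa [tsum_fintype] at this
      have h2 : (∑ s : Fin (T + 1) → S, ∏ t : Fin (T + 1),
            (if t.1 = 0 then p0 (s t) * PMF.pure (σ (s t)) (o t)
              else p (s ⟨t.1 - 1, by have := t.2; omega⟩)
                (a ⟨t.1 - 1, by have := t.2; omega⟩) (s t)))
          = ∑ x : S, p0 x * PMF.pure (σ x) (o 0) := by
        rw [← markov_sum T (fun x => p0 x * PMF.pure (σ x) (o 0))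
          (fun i x y => p x (a ⟨min (i - 1) T, by omega⟩) y) hk]
        apply Finset.sum_congr rfl
        intro s _
        apply Finset.prod_congr rfl
        intro t _
        by_cases ht : t.1 = 0
        · have ht0 : t = 0 := Fin.ext ht
          subst ht0; simp
        · rw [if_neg ht, if_neg ht]
          have he : (⟨min (t.1 - 1) T, by omega⟩ : Fin (T + 1)) = ⟨t.1 - 1, by omega⟩ :=
            Fin.ext (by simp)
          rw [he]
      have h3 : (∑ x : S, p0 x * PMF.pure (σ x) (o 0)) = p0 (o 0) := by
        have hm := DFunLike.congr_fun hσ (o 0)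
        rw [PMF.map_apply, tsum_fintype] at hm
        rw [← hm]
        apply Finset.sum_congr rfl
        intro x _
        by_cases hx : o 0 = σ x <;> simp [PMF.pure_apply, hx]
      -- step 3 : rhoV factorization
      have h4 : rhoV p0 p π o a = p0 (o 0) * ∏ t : Fin (T + 1), N t * Pi t := by
        rw [rhoV]
        have hfac : ∀ t : Fin (T + 1),
            (if t.1 = 0 then p0 (o t)
              else p (o ⟨t.1 - 1, by have := t.2; omega⟩)
                (a ⟨t.1 - 1, by have := t.2; omega⟩) (o t)) *
              π t (upTo o t) (below a t) (a t)
            = (if t = 0 then p0 (o 0) else 1) * (N t * Pi t) := by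
          intro t
          by_cases ht : t.1 = 0
          · have ht0 : t = 0 := Fin.ext ht
            subst ht0
            simp [hN, hPi, mul_comm]
          · have ht0 : t ≠ 0 := fun h => ht (by simp [h])
            rw [if_neg ht, if_neg ht0]
            simp only [hN, hPi, if_neg ht]
            ring
        rw [Finset.prod_congr rfl (fun t _ => hfac t), Finset.prod_mul_distrib,
          Finset.prod_ite_eq']
        simp
      -- combine
      calc (∑ s : Fin (T + 1) → S, rhoA p0 p (advSigma p σ) π s o a)
          = (∑ s : Fin (T + 1) → S, ∏ t : Fin (T + 1),
              (if t.1 = 0 then p0 (s t) * PMF.pure (σ (s t)) (o t)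
                else p (s ⟨t.1 - 1, by have := t.2; omega⟩)
                  (a ⟨t.1 - 1, by have := t.2; omega⟩) (s t))) *
            ∏ t : Fin (T + 1), N t * Pi t := by
            rw [Finset.sum_mul]
            exact Finset.sum_congr rfl fun s _ => h1 s
        _ = p0 (o 0) * ∏ t : Fin (T + 1), N t * Pi t := by rw [h2, h3]
        _ = rhoV p0 p π o a := h4.symm
    rw [klDiv]
    apply Finset.sum_eq_zero
    intro x _
    rw [key x.1 x.2]
    rcases eq_or_ne (rhoV p0 p π x.1 x.2).toReal 0 with h | h
    · rw [h]; ring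
    · rw [div_self h, Real.log_one, mul_zero]
  · refine ⟨sbar, hsbar, fun h => hne ?_⟩
    simp only [advSigma] at h
    rw [dif_pos trivial] at h
    have h1 := DFunLike.congr_fun h (σ sbar)
    simp only [PMF.pure_apply, if_pos rfl] at h1
    by_contra hc
    rw [if_neg hc] at h1
    exact one_ne_zero h1
end

section
/- The initial observation of the symmetry-based attack is distributed as the unattacked initial state, and the observation process is a Markov chain of the unattacked MDP: let σ : S → S satisfy p0.map σ = p0 and let the observation process be generated by o_0 = σ(s_0) with s_0 ~ p0, a_t ~ π_t(o_{≤t}, a_{<t}), and o_{t+1} ~ p(o_t, a_t) for 0 ≤ t < T. Then the law of (o_0, a_0, o_1, a_1, …, o_T, a_T) coincides with the law of (s_0, a_0, s_1, a_1, …, s_T, a_T) generated by s_0 ~ p0, a_t ~ π_t(s_{≤t}, a_{<t}), s_{t+1} ~ p(s_t, a_t); in particular, the marginal law of o_0 equals p0. -/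
/-- Auxiliary rollout of an MDP with initial distribution `q0` and transition kernel `p`
under the policy `π`: given the prefix `(o_{<n}, a_{<n})` (with `k = T + 1 - n` steps
remaining), successively sample `o_n ~ p(o_{n-1}, a_{n-1})` (or `o_0 ~ q0`) and
`a_n ~ π_n(o_{≤n}, a_{<n})`, and continue. -/
noncomputable def rolloutAux {T : ℕ} {S A : Type} (q0 : PMF S) (p : S → A → PMF S)
    (π : Pol T S A) :
    (k n : ℕ) → n + k = T + 1 → (Fin n → S) → (Fin n → A) →
      PMF ((Fin (T + 1) → S) × (Fin (T + 1) → A))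
  | 0, n, hn, o, a => PMF.pure (o ∘ Fin.cast (by omega), a ∘ Fin.cast (by omega))
  | k + 1, n, hn, o, a =>
      (if h0 : n = 0 then q0
        else p (o ⟨n - 1, by omega⟩) (a ⟨n - 1, by omega⟩)).bind fun ob =>
        (π ⟨n, by omega⟩ (Fin.snoc o ob) a).bind fun an =>
          rolloutAux q0 p π k (n + 1) (by omega) (Fin.snoc o ob) (Fin.snoc a an)

/-- The law of the sequence `(x_0, a_0, x_1, a_1, …, x_T, a_T)` generated by successive
sampling `x_0 ~ q0`, `a_t ~ π_t(x_{≤t}, a_{<t})`, `x_{t+1} ~ p(x_t, a_t)`. -/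
noncomputable def rollout {T : ℕ} {S A : Type} (q0 : PMF S) (p : S → A → PMF S)
    (π : Pol T S A) : PMF ((Fin (T + 1) → S) × (Fin (T + 1) → A)) :=
  rolloutAux q0 p π (T + 1) 0 (by omega) Fin.elim0 Fin.elim0

lemma rolloutAux_map_zero {T : ℕ} {S A : Type} (q0 : PMF S) (p : S → A → PMF S)
    (π : Pol T S A) :
    ∀ (k n : ℕ) (hn : n + k = T + 1) (o : Fin n → S) (a : Fin n → A) (h1 : 1 ≤ n),
      (rolloutAux q0 p π k n hn o a).map (fun x => x.1 ⟨0, Nat.succ_pos T⟩)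
        = PMF.pure (o ⟨0, h1⟩) := by
  intro k
  induction k with
  | zero =>
    intro n hn o a h1
    rw [rolloutAux, PMF.pure_map]
    rfl
  | succ k ih =>
    intro n hn o a h1
    simp only [rolloutAux, PMF.map_bind]
    rw [dif_neg (by omega)]
    have : ∀ ob an, (rolloutAux q0 p π k (n+1) (by omega) (Fin.snoc o ob) (Fin.snoc a an)).map
        (fun x => x.1 ⟨0, Nat.succ_pos T⟩) = PMF.pure (o ⟨0, h1⟩) := by
      intro ob an
      rw [ih (n+1) (by omega) _ _ (by omega)]
      congr 1
      have : (⟨0, by omega⟩ : Fin (n+1)) = Fin.castSucc ⟨0, h1⟩ := rfl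
      rw [this, Fin.snoc_castSucc]
    simp only [this, PMF.bind_const]

/-- The initial observation of the symmetry-based attack is distributed
as the unattacked initial state, and the observation process is a Markov chain of the
unattacked MDP: if `p0.map σ = p0`, then the law of `(o_0, a_0, …, o_T, a_T)` generated by
`o_0 = σ(s_0)` with `s_0 ~ p0` (i.e. `o_0 ~ p0.map σ`), `a_t ~ π_t(o_{≤t}, a_{<t})`,
`o_{t+1} ~ p(o_t, a_t)` coincides with the law of `(s_0, a_0, …, s_T, a_T)` generated by
`s_0 ~ p0`, `a_t ~ π_t(s_{≤t}, a_{<t})`, `s_{t+1} ~ p(s_t, a_t)`; in particular, the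
marginal law of `o_0` equals `p0`. -/
theorem symmetry_attack_observation_markov_chain (T : ℕ) (S A : Type)
    [Fintype S] [Nonempty S] [Fintype A] [Nonempty A]
    (p0 : PMF S) (p : S → A → PMF S) (σ : S → S) (hσ : p0.map σ = p0)
    (π : Pol T S A) :
    rollout (p0.map σ) p π = rollout p0 p π ∧
      (rollout (p0.map σ) p π).map (fun x => x.1 ⟨0, Nat.succ_pos T⟩) = p0 := by
  rw [hσ]
  refine ⟨rfl, ?_⟩
  unfold rollout
  simp only [rolloutAux, dif_pos rfl, PMF.map_bind]
  have : ∀ ob an, (rolloutAux p0 p π T (0+1) (by omega) (Fin.snoc Fin.elim0 ob)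
      (Fin.snoc Fin.elim0 an)).map (fun x => x.1 ⟨0, Nat.succ_pos T⟩) = PMF.pure ob := by
    intro ob an
    rw [rolloutAux_map_zero p0 p π _ _ _ _ _ (by omega)]
    simp [Fin.snoc]
  simp only [this, PMF.bind_const]
  exact PMF.bind_pure p0
end
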